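/- arXiv:0907.3054 — 3 statements merged into one kernel-verified Lean document; each statement's English description precedes it below -/
import Mathlib

section
/- For 1 < α < 2, the principal value integral over {|s| > 1+ε} ∪ {1/|s| > 1+ε} of (|s|^(α-1) - 1)/|1-s|^(1+α) ds equals zero for every ε > 0; more precisely, ∫_{|s|>1+ε} (|s|^(α-1) - 1)/|1-s|^(1+α) ds + ∫_{0<|s|<1/(1+ε)} (|s|^(α-1) - 1)/|1-s|^(1+α) ds = 0. -/
/-!
The substitution `s ↦ 1/s` maps `{0 < |s| < 1/(1+ε)}` onto `{|s| > 1+ε}`, and its Jacobian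
`1/s²` turns the integrand `(|s|^(α-1) - 1)/|1-s|^(1+α)` into its negative, because
`|1 - 1/s| = |1-s|/|s|` and `|s|^(1-α)·|s|^(1+α) = |s|²`. Hence the two integrals cancel.
-/

open MeasureTheory Set

lemma inv_sq_mul_rpow_div_rpow_inv (α : ℝ) {s : ℝ} (hs : s ≠ 0) :
    (s ^ 2)⁻¹ * ((|s⁻¹| ^ (α - 1) - 1) / |1 - s⁻¹| ^ (1 + α))
      = -((|s| ^ (α - 1) - 1) / |1 - s| ^ (1 + α)) := by
  have habs : 0 < |s| := abs_pos.mpr hs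
  have hsub : |1 - s⁻¹| = |1 - s| / |s| := by
    rw [abs_sub_comm 1 s, ← abs_div, sub_div, div_self hs, one_div]
  have h_two : |s| ^ (1 - α) * |s| ^ (1 + α) = |s| ^ 2 := by
    rw [← Real.rpow_add habs, ← Real.rpow_natCast]
    norm_num
  have h_one_add : |s| ^ (α - 1) * |s| ^ 2 = |s| ^ (1 + α) := by
    rw [← Real.rpow_natCast, ← Real.rpow_add habs]
    ring_nf
  rw [hsub, Real.div_rpow (abs_nonneg _) habs.le, div_div_eq_mul_div, abs_inv,
    Real.inv_rpow habs.le, ← Real.rpow_neg habs.le, neg_sub, ← sq_abs]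
  field_simp
  rw [← neg_div]
  congr 1
  linear_combination h_two + h_one_add

lemma integral_image_inv {E : Type*} [NormedAddCommGroup E] [NormedSpace ℝ E] {B : Set ℝ}
    (hB : MeasurableSet B) (h0 : (0 : ℝ) ∉ B) (f : ℝ → E) :
    ∫ s in (·⁻¹) '' B, f s = ∫ s in B, (s ^ 2)⁻¹ • f s⁻¹ := by
  have hderiv : ∀ s ∈ B, HasDerivWithinAt (·⁻¹) (-(s ^ 2)⁻¹) B s := fun s hs =>
    (hasDerivAt_inv (ne_of_mem_of_not_mem hs h0)).hasDerivWithinAt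
  rw [integral_image_eq_integral_abs_deriv_smul hB hderiv inv_injective.injOn]
  simp only [abs_neg, abs_inv, abs_pow, sq_abs]

lemma image_inv_setOf_abs_lt_one_div {c : ℝ} (hc : 0 < c) :
    (·⁻¹) '' {s : ℝ | 0 < |s| ∧ |s| < 1 / c} = {s | c < |s|} := by
  ext s
  rw [image_inv_eq_inv, mem_inv, mem_ofPred_eq, mem_ofPred_eq, abs_inv, inv_pos, one_div]
  constructor
  · rintro ⟨hs, hlt⟩
    exact (inv_lt_inv₀ hs hc).mp hlt
  · intro hlt
    have hs := hc.trans hlt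
    exact ⟨hs, (inv_lt_inv₀ hs hc).mpr hlt⟩

theorem stmt2_general (α ε : ℝ) (hε : 0 < ε) :
    (∫ s in {s : ℝ | 1 + ε < |s|}, (|s| ^ (α - 1) - 1) / |1 - s| ^ (1 + α))
      + (∫ s in {s : ℝ | 0 < |s| ∧ |s| < 1 / (1 + ε)},
          (|s| ^ (α - 1) - 1) / |1 - s| ^ (1 + α)) = 0 := by
  set B := {s : ℝ | 0 < |s| ∧ |s| < 1 / (1 + ε)}
  have hB : MeasurableSet B :=
    (measurableSet_lt measurable_const measurable_abs).inter
      (measurableSet_lt measurable_abs measurable_const)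
  have h0 : (0 : ℝ) ∉ B := fun h => by simpa using h.1
  have hcancel : EqOn (fun s => (s ^ 2)⁻¹ • ((|s⁻¹| ^ (α - 1) - 1) / |1 - s⁻¹| ^ (1 + α)))
      (fun s => -((|s| ^ (α - 1) - 1) / |1 - s| ^ (1 + α))) B := fun s hs =>
    inv_sq_mul_rpow_div_rpow_inv α (ne_of_mem_of_not_mem hs h0)
  rw [← image_inv_setOf_abs_lt_one_div (by linarith : (0 : ℝ) < 1 + ε), integral_image_inv hB h0,
    setIntegral_congr_fun hB hcancel, integral_neg, neg_add_cancel]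

/-- The principal value integral of `(|s|^(α-1) - 1)/|1-s|^(1+α)` over
`{|s| > 1+ε} ∪ {0 < |s| < 1/(1+ε)}` vanishes. -/
theorem stmt2 (α ε : ℝ) (hα1 : 1 < α) (hα2 : α < 2) (hε : 0 < ε) :
    (∫ s in {s : ℝ | 1 + ε < |s|}, (|s| ^ (α - 1) - 1) / |1 - s| ^ (1 + α))
      + (∫ s in {s : ℝ | 0 < |s| ∧ |s| < 1 / (1 + ε)},
          (|s| ^ (α - 1) - 1) / |1 - s| ^ (1 + α)) = 0 :=
  stmt2_general α ε hε
end

section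
/- Let Ω ⊂ ℝⁿ be an open convex set with nonempty boundary, 1 < α < 2, and x ∈ Ω. Then ∫_{S^{n-1}} (1/d_{w,Ω}(x) + 1/δ_{w,Ω}(x))^α dw ≥ (∫_{S^{n-1}} |w_n|^α dw) · (1/d_Ω(x) + 1/(D_Ω(x) − d_Ω(x)))^α, where d_Ω(x) = dist(x, ∂Ω), D_Ω(x) is the infimum over supporting hyperplanes P at nearest boundary points of x of the width of the smallest slab containing Ω bounded by P, d_{w,Ω}(x) = min{|t| : x+tw ∉ Ω}, δ_{w,Ω}(x) = sup{|t| : x+tw ∈ Ω}, and the term 1/(D_Ω(x) − d_Ω(x)) is interpreted as 0 when D_Ω(x) = ∞. -/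
open MeasureTheory Metric
open scoped ENNReal RealInnerProductSpace

/-- The distance `d_{w,Ω}(x) = min{|t| : x + t w ∉ Ω}`, valued in `[0,∞]`. -/
noncomputable def dirDist {n : ℕ} (Ω : Set (EuclideanSpace ℝ (Fin n)))
    (x w : EuclideanSpace ℝ (Fin n)) : ℝ≥0∞ :=
  sInf {r : ℝ≥0∞ | ∃ t : ℝ, x + t • w ∉ Ω ∧ r = ENNReal.ofReal |t|}

/-- The quantity `δ_{w,Ω}(x) = sup{|t| : x + t w ∈ Ω}`, valued in `[0,∞]`. -/
noncomputable def dirDelta {n : ℕ} (Ω : Set (EuclideanSpace ℝ (Fin n)))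
    (x w : EuclideanSpace ℝ (Fin n)) : ℝ≥0∞ :=
  sSup {r : ℝ≥0∞ | ∃ t : ℝ, x + t • w ∈ Ω ∧ r = ENNReal.ofReal |t|}

/-- The width `D_Ω(x)`: the infimum, over nearest boundary points `z` of `x` and inward unit
normals `e` of supporting hyperplanes of `Ω` at `z`, of the width of the smallest slab
containing `Ω` bounded by the hyperplane; valued in `[0,∞]`. -/
noncomputable def slabWidth {n : ℕ} (Ω : Set (EuclideanSpace ℝ (Fin n)))
    (x : EuclideanSpace ℝ (Fin n)) : ℝ≥0∞ :=
  ⨅ z ∈ {z : EuclideanSpace ℝ (Fin n) |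
      z ∈ frontier Ω ∧ dist x z = Metric.infDist x (frontier Ω)},
    ⨅ e ∈ {e : EuclideanSpace ℝ (Fin n) | ‖e‖ = 1 ∧ ∀ y ∈ Ω, (0 : ℝ) ≤ ⟪e, y - z⟫},
      ⨆ y ∈ Ω, ENNReal.ofReal ⟪e, y - z⟫

/-!
Fix a nearest boundary point `z` of `x` and a supporting hyperplane `⟪e, · - z⟫ = 0` of `Ω`
there; then `⟪e, x - z⟫ = d_Ω(x)`. If `Ω` lies in the slab `0 < ⟪e, · - z⟫ ≤ D`, the line
`x + t w` leaves `Ω` through the hyperplane once `|t| ≥ d_Ω(x) / |⟪e, w⟫|`, and cannot reach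
the opposite face before `|t| = (D - d_Ω(x)) / |⟪e, w⟫|` (this uses `2 d_Ω(x) ≤ D`). Hence
`|⟪e, w⟫| (1/d_Ω(x) + 1/(D - d_Ω(x))) ≤ 1/d_{w,Ω}(x) + 1/δ_{w,Ω}(x)` for every `w`; raising to
the power `α` and integrating over the sphere, rotation invariance turns `∫ |⟪e, w⟫|^α` into
`∫ |w_n|^α`. Finally the left-hand side is continuous and antitone in the width `D`, so the bound
passes to the infimum `D_Ω(x)` over all admissible pairs `(z, e)`.
-/

open scoped Pointwise

section Sphere

variable {E : Type*} [NormedAddCommGroup E] [InnerProductSpace ℝ E]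

theorem MeasureTheory.Measure.measurePreserving_toSphere [MeasurableSpace E] [BorelSpace E]
    {μ : Measure E} (O : E ≃ₗᵢ[ℝ] E) (hO : MeasurePreserving O μ μ) :
    MeasurePreserving (fun w : sphere (0 : E) 1 => (⟨O w, by simp⟩ : sphere (0 : E) 1))
      μ.toSphere μ.toSphere := by
  have hcont : Continuous (fun w : sphere (0 : E) 1 => (⟨O w, by simp⟩ : sphere (0 : E) 1)) :=
    (O.continuous.comp continuous_subtype_val).subtype_mk _
  refine ⟨hcont.measurable, Measure.ext fun s hs => ?_⟩
  rw [Measure.map_apply hcont.measurable hs, toSphere_apply' _ (hcont.measurable hs),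
    toSphere_apply' _ hs]
  have hpre : ((↑) '' ((fun w : sphere (0 : E) 1 => (⟨O w, by simp⟩ : sphere (0 : E) 1)) ⁻¹' s)
      : Set E) = O ⁻¹' ((↑) '' s) := by
    ext u
    constructor
    · rintro ⟨w, hw, rfl⟩
      exact ⟨_, hw, rfl⟩
    · rintro ⟨p, hp, hpu⟩
      have hu : u ∈ sphere (0 : E) 1 := by
        rw [mem_sphere_zero_iff_norm, ← O.norm_map, ← hpu, ← mem_sphere_zero_iff_norm]
        exact p.2
      exact ⟨⟨u, hu⟩, by simpa [← hpu] using hp, rfl⟩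
  have hsmul : Set.Ioo (0 : ℝ) 1 • (O ⁻¹' ((↑) '' s) : Set E)
      = O ⁻¹' (Set.Ioo (0 : ℝ) 1 • (↑) '' s) := by
    ext u
    simp only [Set.mem_preimage, Set.mem_smul]
    constructor
    · rintro ⟨c, hc, v, hv, rfl⟩
      exact ⟨c, hc, O v, hv, by simp⟩
    · rintro ⟨c, hc, v, hv, huv⟩
      exact ⟨c, hc, O.symm v, by simpa using hv, by rw [← O.symm_apply_apply u, ← huv]; simp⟩
  rw [hpre, hsmul]
  exact congrArg _ (hO.measure_preimage_equiv (f := O.toHomeomorph.toMeasurableEquiv) _)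

variable [FiniteDimensional ℝ E] [MeasurableSpace E] [BorelSpace E]

theorem lintegral_toSphere_comp_inner_eq {g : ℝ → ℝ≥0∞} (hg : Measurable g) {e e' : E}
    (he : ‖e‖ = 1) (he' : ‖e'‖ = 1) :
    ∫⁻ w : sphere (0 : E) 1, g ⟪e, w⟫ ∂(volume : Measure E).toSphere
      = ∫⁻ w : sphere (0 : E) 1, g ⟪e', w⟫ ∂(volume : Measure E).toSphere := by
  set O : E ≃ₗᵢ[ℝ] E := Submodule.reflection (ℝ ∙ (e' - e))ᗮ
  have hOe : O e' = e := Submodule.reflection_sub (by rw [he, he'])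
  calc ∫⁻ w : sphere (0 : E) 1, g ⟪e, w⟫ ∂(volume : Measure E).toSphere
      = ∫⁻ w : sphere (0 : E) 1, g ⟪e, O w⟫ ∂(volume : Measure E).toSphere :=
        (((volume : Measure E).measurePreserving_toSphere O O.measurePreserving).lintegral_comp
          (hg.comp (continuous_const.inner continuous_subtype_val).measurable)).symm
    _ = _ := by simp only [← hOe, LinearIsometryEquiv.inner_map_map]

theorem lintegral_toSphere_ofReal_abs_inner_rpow_lt_top {α : ℝ} (hα : 0 ≤ α) {e : E}
    (he : ‖e‖ = 1) :
    ∫⁻ w : sphere (0 : E) 1, ENNReal.ofReal (|⟪e, w⟫| ^ α) ∂(volume : Measure E).toSphere < ⊤ := by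
  have hle : ∀ w : sphere (0 : E) 1, ENNReal.ofReal (|⟪e, w⟫| ^ α) ≤ 1 := fun w => by
    refine ENNReal.ofReal_le_one.2 (Real.rpow_le_one (abs_nonneg _) ?_ hα)
    simpa [he] using abs_real_inner_le_norm e w
  calc _ ≤ ∫⁻ _ : sphere (0 : E) 1, 1 ∂(volume : Measure E).toSphere := lintegral_mono hle
    _ < ⊤ := by rw [lintegral_one]; exact measure_lt_top _ _

end Sphere

theorem lintegral_toSphere_ofReal_abs_apply_rpow_lt_top {n : ℕ} {α : ℝ} (hα : 0 ≤ α)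
    (i : Fin n) :
    ∫⁻ w : sphere (0 : EuclideanSpace ℝ (Fin n)) 1,
        ENNReal.ofReal (|(w : EuclideanSpace ℝ (Fin n)) i| ^ α)
        ∂(volume : Measure (EuclideanSpace ℝ (Fin n))).toSphere < ⊤ := by
  simpa only [EuclideanSpace.basisFun_inner] using
    lintegral_toSphere_ofReal_abs_inner_rpow_lt_top hα (e := EuclideanSpace.basisFun _ ℝ i)
      (by simp)

theorem lintegral_toSphere_comp_apply_eq_comp_inner {n : ℕ} {g : ℝ → ℝ≥0∞} (hg : Measurable g)
    (i : Fin n) {e : EuclideanSpace ℝ (Fin n)} (he : ‖e‖ = 1) :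
    ∫⁻ w : sphere (0 : EuclideanSpace ℝ (Fin n)) 1, g ((w : EuclideanSpace ℝ (Fin n)) i)
        ∂(volume : Measure (EuclideanSpace ℝ (Fin n))).toSphere
      = ∫⁻ w : sphere (0 : EuclideanSpace ℝ (Fin n)) 1, g ⟪e, w⟫
        ∂(volume : Measure (EuclideanSpace ℝ (Fin n))).toSphere := by
  simp_rw [← EuclideanSpace.basisFun_inner]
  exact lintegral_toSphere_comp_inner_eq hg (by simp) he

section Geometry

variable {E : Type*} [NormedAddCommGroup E] [InnerProductSpace ℝ E] {Ω : Set E} {x y z e w : E}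

theorem inner_add_smul_sub (t : ℝ) : ⟪e, x + t • w - z⟫ = ⟪e, x - z⟫ + t * ⟪e, w⟫ := by
  rw [show x + t • w - z = (x - z) + t • w by abel, inner_add_right, real_inner_smul_right]

theorem add_le_inner_sub_of_forall_mem_ball {r c : ℝ} (he : ‖e‖ = 1) (hr : 0 < r)
    (h : ∀ y ∈ ball x r, c ≤ ⟪e, y - z⟫) : c + r ≤ ⟪e, x - z⟫ := by
  suffices r ≤ ⟪e, x - z⟫ - c by linarith
  refine le_of_forall_lt_imp_le_of_dense fun t ht => ?_
  set s := max t 0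
  have hs : x - s • e ∈ ball x r := by
    rw [mem_ball, dist_eq_norm, sub_sub_cancel_left, norm_neg, norm_smul, he, mul_one,
      Real.norm_of_nonneg (le_max_right _ _)]
    exact max_lt ht hr
  have hc := h _ hs
  rw [show x - s • e - z = (x - z) - s • e by abel, inner_sub_right, real_inner_smul_right,
    real_inner_self_eq_norm_sq, he] at hc
  linarith [le_max_left t 0]

theorem IsOpen.inner_sub_pos (hΩ : IsOpen Ω) (he : ‖e‖ = 1) (h : ∀ y ∈ Ω, 0 ≤ ⟪e, y - z⟫)
    (hy : y ∈ Ω) : 0 < ⟪e, y - z⟫ := by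
  obtain ⟨r, hr, hball⟩ := Metric.isOpen_iff.1 hΩ y hy
  linarith [add_le_inner_sub_of_forall_mem_ball he hr fun y' hy' => h y' (hball hy')]

theorem inner_sub_eq_dist_of_ball_subset {d : ℝ} (he : ‖e‖ = 1) (hball : ball x d ⊆ Ω)
    (h : ∀ y ∈ Ω, 0 ≤ ⟪e, y - z⟫) (hxz : dist x z = d) : ⟪e, x - z⟫ = d := by
  rcases (dist_nonneg.trans_eq hxz).eq_or_lt with hd | hd
  · rw [← hd, dist_eq_zero] at hxz
    rw [← hd, hxz, sub_self, inner_zero_right]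
  refine le_antisymm ?_ ?_
  · calc ⟪e, x - z⟫ ≤ ‖e‖ * ‖x - z‖ := real_inner_le_norm _ _
      _ = d := by rw [he, one_mul, ← dist_eq_norm, hxz]
  · simpa using add_le_inner_sub_of_forall_mem_ball he hd fun y hy => h y (hball hy)

theorem Convex.exists_unit_inner_sub_pos [CompleteSpace E] (hΩ : Convex ℝ Ω) (ho : IsOpen Ω)
    (hne : Ω.Nonempty) (hz : z ∉ Ω) : ∃ e : E, ‖e‖ = 1 ∧ ∀ y ∈ Ω, 0 < ⟪e, y - z⟫ := by
  obtain ⟨f, hf⟩ := geometric_hahn_banach_open_point hΩ ho hz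
  set v := -(InnerProductSpace.toDual ℝ E).symm f
  have hv : ∀ y, ⟪v, y - z⟫ = f z - f y := fun y => by
    simp [v, inner_sub_right, InnerProductSpace.toDual_symm_apply, neg_add_eq_sub]
  have hv0 : v ≠ 0 := by
    obtain ⟨y, hy⟩ := hne
    rintro h0
    have := hv y
    rw [h0, inner_zero_left] at this
    linarith [hf y hy]
  refine ⟨‖v‖⁻¹ • v, norm_smul_inv_norm hv0, fun y hy => ?_⟩
  rw [real_inner_smul_left, hv]
  exact mul_pos (by positivity) (sub_pos.2 (hf y hy))

theorem ball_infDist_frontier_subset {F : Type*} [NormedAddCommGroup F] [NormedSpace ℝ F]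
    [FiniteDimensional ℝ F] {s : Set F} {x : F} (hx : x ∈ s) :
    ball x (infDist x (frontier s)) ⊆ s := by
  rcases eq_or_ne s Set.univ with rfl | hs
  · exact Set.subset_univ _
  obtain ⟨y, hy, hxy⟩ := exists_mem_frontier_infDist_compl_eq_dist hx hs
  exact (ball_subset_ball ((infDist_le_dist_of_mem hy).trans hxy.ge)).trans
    ball_infDist_compl_subset

-- `slabWidth Ω x` is the infimum of these widths over the admissible pairs `(z, e)`.
noncomputable def hyperplaneSlabWidth (Ω : Set E) (z e : E) : ℝ≥0∞ :=
  ⨆ y ∈ Ω, ENNReal.ofReal ⟪e, y - z⟫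

theorem inner_sub_le_toReal_hyperplaneSlabWidth (hW : hyperplaneSlabWidth Ω z e ≠ ⊤)
    (hy : y ∈ Ω) :
    ⟪e, y - z⟫ ≤ (hyperplaneSlabWidth Ω z e).toReal :=
  (ENNReal.ofReal_le_iff_le_toReal hW).1 <|
    le_iSup₂ (f := fun y (_ : y ∈ Ω) => ENNReal.ofReal ⟪e, y - z⟫) y hy

end Geometry

theorem ENNReal.ofReal_mul_inv_le_inv_of_le_ofReal_div {X : ℝ≥0∞} {a b : ℝ} (ha : 0 < a)
    (hX : X ≤ ENNReal.ofReal (a / b)) : ENNReal.ofReal b * (ENNReal.ofReal a)⁻¹ ≤ X⁻¹ := by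
  rcases le_or_gt b 0 with hb | hb
  · simp [ENNReal.ofReal_of_nonpos hb]
  calc ENNReal.ofReal b * (ENNReal.ofReal a)⁻¹ = (ENNReal.ofReal (a / b))⁻¹ := by
        rw [← ENNReal.ofReal_inv_of_pos ha, ← ENNReal.ofReal_mul hb.le,
          ← ENNReal.ofReal_inv_of_pos (div_pos ha hb), inv_div, div_eq_mul_inv]
    _ ≤ X⁻¹ := ENNReal.inv_le_inv.2 hX

section Directional

variable {n : ℕ} {Ω : Set (EuclideanSpace ℝ (Fin n))} {x z e w : EuclideanSpace ℝ (Fin n)}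

theorem dirDist_le_ofReal_div (hx : x ∈ Ω) (hpos : ∀ y ∈ Ω, 0 < ⟪e, y - z⟫)
    (hw : ⟪e, w⟫ ≠ 0) : dirDist Ω x w ≤ ENNReal.ofReal (⟪e, x - z⟫ / |⟪e, w⟫|) := by
  refine sInf_le ⟨-(⟪e, x - z⟫ / ⟪e, w⟫), fun hmem => ?_, ?_⟩
  · have := hpos _ hmem
    rw [inner_add_smul_sub, neg_mul, div_mul_cancel₀ _ hw, add_neg_cancel] at this
    exact this.false
  · rw [abs_neg, abs_div, abs_of_pos (hpos x hx)]

theorem dirDelta_le_ofReal_div {D : ℝ} (hslab : ∀ y ∈ Ω, 0 ≤ ⟪e, y - z⟫ ∧ ⟪e, y - z⟫ ≤ D)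
    (hxD : 2 * ⟪e, x - z⟫ ≤ D) (hw : ⟪e, w⟫ ≠ 0) :
    dirDelta Ω x w ≤ ENNReal.ofReal ((D - ⟪e, x - z⟫) / |⟪e, w⟫|) := by
  refine sSup_le ?_
  rintro _ ⟨t, ht, rfl⟩
  obtain ⟨hlo, hhi⟩ := hslab _ ht
  rw [inner_add_smul_sub] at hlo hhi
  refine ENNReal.ofReal_le_ofReal ((le_div_iff₀ (abs_pos.2 hw)).2 ?_)
  rw [← abs_mul, abs_le]
  constructor <;> linarith

theorem ofReal_abs_inner_mul_le_inv_dirDist_add_inv_dirDelta (hΩ : IsOpen Ω) (hx : x ∈ Ω)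
    (he : ‖e‖ = 1) (hsupp : ∀ y ∈ Ω, 0 ≤ ⟪e, y - z⟫) (hball : ball x ⟪e, x - z⟫ ⊆ Ω)
    (w : EuclideanSpace ℝ (Fin n)) :
    ENNReal.ofReal |⟪e, w⟫| * ((ENNReal.ofReal ⟪e, x - z⟫)⁻¹
        + (hyperplaneSlabWidth Ω z e - ENNReal.ofReal ⟪e, x - z⟫)⁻¹)
      ≤ (dirDist Ω x w)⁻¹ + (dirDelta Ω x w)⁻¹ := by
  have hpos : ∀ y ∈ Ω, 0 < ⟪e, y - z⟫ := fun y hy => hΩ.inner_sub_pos he hsupp hy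
  have hd := hpos x hx
  rcases eq_or_ne ⟪e, w⟫ 0 with hw | hw
  · simp [hw]
  rw [mul_add]
  refine add_le_add (ENNReal.ofReal_mul_inv_le_inv_of_le_ofReal_div hd
    (dirDist_le_ofReal_div hx hpos hw)) ?_
  rcases eq_or_ne (hyperplaneSlabWidth Ω z e) ⊤ with hW | hW
  · simp [hW]
  set D := (hyperplaneSlabWidth Ω z e).toReal
  have hslab : ∀ y ∈ Ω, 0 ≤ ⟪e, y - z⟫ ∧ ⟪e, y - z⟫ ≤ D := fun y hy =>
    ⟨hsupp y hy, inner_sub_le_toReal_hyperplaneSlabWidth hW hy⟩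
  have hxD : 2 * ⟪e, x - z⟫ ≤ D := by
    have := add_le_inner_sub_of_forall_mem_ball (c := -D) (e := -e) (by rwa [norm_neg]) hd
      fun y hy => by rw [inner_neg_left, neg_le_neg_iff]; exact (hslab y (hball hy)).2
    rw [inner_neg_left] at this
    linarith
  rw [← ENNReal.ofReal_toReal hW, ← ENNReal.ofReal_sub _ hd.le]
  exact ENNReal.ofReal_mul_inv_le_inv_of_le_ofReal_div (by linarith)
    (dirDelta_le_ofReal_div hslab hxD hw)

theorem lintegral_ofReal_abs_inner_rpow_mul_le {α : ℝ} (hα : 0 ≤ α) (hΩ : IsOpen Ω)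
    (hx : x ∈ Ω) (he : ‖e‖ = 1) (hsupp : ∀ y ∈ Ω, 0 ≤ ⟪e, y - z⟫)
    (hball : ball x ⟪e, x - z⟫ ⊆ Ω) :
    (∫⁻ w : sphere (0 : EuclideanSpace ℝ (Fin n)) 1, ENNReal.ofReal (|⟪e, w⟫| ^ α)
        ∂(volume : Measure (EuclideanSpace ℝ (Fin n))).toSphere) *
      ((ENNReal.ofReal ⟪e, x - z⟫)⁻¹
        + (hyperplaneSlabWidth Ω z e - ENNReal.ofReal ⟪e, x - z⟫)⁻¹) ^ α
    ≤ ∫⁻ w : sphere (0 : EuclideanSpace ℝ (Fin n)) 1,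
        ((dirDist Ω x w)⁻¹ + (dirDelta Ω x w)⁻¹) ^ α
        ∂(volume : Measure (EuclideanSpace ℝ (Fin n))).toSphere := by
  rw [← lintegral_mul_const _ (by fun_prop)]
  refine lintegral_mono fun w => ?_
  rw [← ENNReal.ofReal_rpow_of_nonneg (abs_nonneg _) hα, ← ENNReal.mul_rpow_of_nonneg _ _ hα]
  exact ENNReal.rpow_le_rpow
    (ofReal_abs_inner_mul_le_inv_dirDist_add_inv_dirDelta hΩ hx he hsupp hball w) hα

end Directional

/-- The pointwise lower bound
`∫_{S^{n-1}} (1/d_{w,Ω}(x) + 1/δ_{w,Ω}(x))^α dw ≥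
  (∫_{S^{n-1}} |w_n|^α dw) · (1/d_Ω(x) + 1/(D_Ω(x) − d_Ω(x)))^α`
for an open convex set `Ω` (the term `1/(D_Ω(x)-d_Ω(x))` is `0` when `D_Ω(x) = ∞`). -/
theorem stmt11 (n : ℕ) (hn : 1 ≤ n) (α : ℝ) (hα1 : 1 < α)
    (Ω : Set (EuclideanSpace ℝ (Fin n))) (hΩo : IsOpen Ω) (hconv : Convex ℝ Ω)
    (hb : (frontier Ω).Nonempty) (x : EuclideanSpace ℝ (Fin n)) (hx : x ∈ Ω) :
    (∫⁻ w : sphere (0 : EuclideanSpace ℝ (Fin n)) 1,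
        ENNReal.ofReal (|(w : EuclideanSpace ℝ (Fin n)) ⟨n - 1, by omega⟩| ^ α)
        ∂((volume : Measure (EuclideanSpace ℝ (Fin n))).toSphere)) *
      (1 / ENNReal.ofReal (Metric.infDist x (frontier Ω))
        + 1 / (slabWidth Ω x - ENNReal.ofReal (Metric.infDist x (frontier Ω)))) ^ α
    ≤ ∫⁻ w : sphere (0 : EuclideanSpace ℝ (Fin n)) 1,
        (1 / dirDist Ω x (w : EuclideanSpace ℝ (Fin n))
          + 1 / dirDelta Ω x (w : EuclideanSpace ℝ (Fin n))) ^ α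
        ∂((volume : Measure (EuclideanSpace ℝ (Fin n))).toSphere) := by
  have hα : 0 ≤ α := by linarith
  have hmeas : Measurable fun t : ℝ => ENNReal.ofReal (|t| ^ α) := by fun_prop
  simp only [one_div]
  set d := infDist x (frontier Ω)
  set I := ∫⁻ w : sphere (0 : EuclideanSpace ℝ (Fin n)) 1,
    ENNReal.ofReal (|(w : EuclideanSpace ℝ (Fin n)) ⟨n - 1, by omega⟩| ^ α)
    ∂(volume : Measure (EuclideanSpace ℝ (Fin n))).toSphere
  set g : ℝ≥0∞ → ℝ≥0∞ := fun D => I * ((ENNReal.ofReal d)⁻¹ + (D - ENNReal.ofReal d)⁻¹) ^ α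
  set C := {D | g D ≤ ∫⁻ w : sphere (0 : EuclideanSpace ℝ (Fin n)) 1,
    ((dirDist Ω x w)⁻¹ + (dirDelta Ω x w)⁻¹) ^ α
    ∂(volume : Measure (EuclideanSpace ℝ (Fin n))).toSphere}
  have hball : ball x d ⊆ Ω := ball_infDist_frontier_subset hx
  have hwidth_mem : ∀ z ∈ frontier Ω, dist x z = d → ∀ e, ‖e‖ = 1 →
      (∀ y ∈ Ω, 0 ≤ ⟪e, y - z⟫) → hyperplaneSlabWidth Ω z e ∈ C := by
    intro z _ hzd e he hsupp
    have hxz := inner_sub_eq_dist_of_ball_subset he hball hsupp hzd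
    have := lintegral_ofReal_abs_inner_rpow_mul_le hα hΩo hx he hsupp (hxz ▸ hball)
    rwa [hxz, ← lintegral_toSphere_comp_apply_eq_comp_inner hmeas _ he] at this
  have hC_nonempty : C.Nonempty := by
    obtain ⟨z, hz, hzd⟩ := isClosed_frontier.exists_infDist_eq_dist hb x
    obtain ⟨e, he, hpos⟩ := hconv.exists_unit_inner_sub_pos hΩo ⟨x, hx⟩
      (Set.disjoint_left.1 (disjoint_frontier_iff_isOpen.2 hΩo) hz)
    exact ⟨_, hwidth_mem z hz hzd.symm e he fun y hy => (hpos y hy).le⟩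
  -- `g` is continuous and antitone, so the closed set `C` is `Set.Ici (sInf C)`.
  have hg : Continuous g :=
    (ENNReal.continuous_const_mul (lintegral_toSphere_ofReal_abs_apply_rpow_lt_top hα _).ne).comp <|
      ENNReal.continuous_rpow_const.comp <|
      continuous_const.add <| continuous_inv.comp <| ENNReal.continuous_sub_right _
  have hg_anti : Antitone g := fun D D' hDD' => by simp only [g]; gcongr
  have hle : sInf C ≤ slabWidth Ω x :=
    le_iInf₂ fun z hz => le_iInf₂ fun e he => sInf_le (hwidth_mem z hz.1 hz.2 e he.1 he.2)
  exact (hg_anti hle).trans ((isClosed_le hg continuous_const).sInf_mem hC_nonempty)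
end

section
/- For 0 < α < 2 with α ≠ 1, the constant κ_{1,α} = (1/α)[2^(1−α) Γ((2−α)/2) Γ((1+α)/2)/√π − 1] is strictly positive, and κ_{1,1} = 0. -/
/-!
Put `t = 1 - α ∈ (-1, 1)`. The duplication formula turns `2^t Γ((1+t)/2)` into
`√π Γ(1+t) / Γ(1+t/2)`, so the claim becomes `Γ(1+t/2) < Γ(1+t) Γ(1-t/2)` for `t ≠ 0`.
Log-convexity of `Γ` between `1` and `1+t` gives `Γ(1+t/2)² ≤ Γ(1+t)`, and the reflection
formula gives `Γ(1-t/2) Γ(1+t/2) = (πt/2) / sin(πt/2) > 1`; multiplying the two yields the claim.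
-/

open Real

namespace Real

lemma one_lt_Gamma_one_sub_mul_Gamma_one_add_of_pos {s : ℝ} (hs0 : 0 < s) (hs1 : s < 1) :
    1 < Gamma (1 - s) * Gamma (1 + s) := by
  have hπs : 0 < π * s := mul_pos pi_pos hs0
  have hsin : 0 < sin (π * s) := sin_pos_of_pos_of_lt_pi hπs (by nlinarith [pi_pos])
  have hreflect : Gamma (1 - s) * Gamma (1 + s) = π * s / sin (π * s) := by
    rw [add_comm, Gamma_add_one hs0.ne', mul_div_right_comm, ← Gamma_mul_Gamma_one_sub s]
    ring
  rw [hreflect, one_lt_div hsin]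
  exact sin_lt hπs

lemma one_lt_Gamma_one_sub_mul_Gamma_one_add {s : ℝ} (hs0 : s ≠ 0) (hs1 : |s| < 1) :
    1 < Gamma (1 - s) * Gamma (1 + s) := by
  rcases hs0.lt_or_gt with hneg | hpos
  · have h := one_lt_Gamma_one_sub_mul_Gamma_one_add_of_pos (neg_pos.2 hneg)
      (by linarith [neg_abs_le s])
    rwa [sub_neg_eq_add, ← sub_eq_add_neg, mul_comm] at h
  · exact one_lt_Gamma_one_sub_mul_Gamma_one_add_of_pos hpos (by linarith [le_abs_self s])

lemma Gamma_midpoint_sq_le {x y : ℝ} (hx : 0 < x) (hy : 0 < y) :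
    Gamma ((x + y) / 2) ^ 2 ≤ Gamma x * Gamma y := by
  have h := Gamma_mul_add_mul_le_rpow_Gamma_mul_rpow_Gamma hx hy (a := 1 / 2) (b := 1 / 2)
    (by norm_num) (by norm_num) (by norm_num)
  rw [← mul_rpow (Gamma_pos_of_pos hx).le (Gamma_pos_of_pos hy).le, ← sqrt_eq_rpow,
    show 1 / 2 * x + 1 / 2 * y = (x + y) / 2 by ring] at h
  calc Gamma ((x + y) / 2) ^ 2 ≤ √(Gamma x * Gamma y) ^ 2 :=
        pow_le_pow_left₀ (Gamma_pos_of_pos (by positivity)).le h 2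
    _ = Gamma x * Gamma y :=
        sq_sqrt (mul_pos (Gamma_pos_of_pos hx) (Gamma_pos_of_pos hy)).le

lemma Gamma_one_add_half_lt {t : ℝ} (ht0 : t ≠ 0) (ht1 : -1 < t) (ht2 : t < 2) :
    Gamma (1 + t / 2) < Gamma (1 + t) * Gamma (1 - t / 2) := by
  have hlogconvex : Gamma (1 + t / 2) ^ 2 ≤ Gamma (1 + t) := by
    simpa [Gamma_one, show (1 + (1 + t)) / 2 = 1 + t / 2 by ring]
      using Gamma_midpoint_sq_le one_pos (by linarith : 0 < 1 + t)
  have hreflect : 1 < Gamma (1 - t / 2) * Gamma (1 + t / 2) :=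
    one_lt_Gamma_one_sub_mul_Gamma_one_add (by positivity)
      (by rw [abs_div, abs_two, div_lt_one two_pos, abs_lt]; constructor <;> linarith)
  have hpos : 0 < Gamma (1 + t / 2) := Gamma_pos_of_pos (by linarith)
  calc Gamma (1 + t / 2) < Gamma (1 + t / 2) * (Gamma (1 - t / 2) * Gamma (1 + t / 2)) :=
        lt_mul_right hpos hreflect
    _ = Gamma (1 + t / 2) ^ 2 * Gamma (1 - t / 2) := by ring
    _ ≤ Gamma (1 + t) * Gamma (1 - t / 2) :=
        mul_le_mul_of_nonneg_right hlogconvex (Gamma_pos_of_pos (by linarith)).le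

end Real

lemma sqrt_pi_lt_two_rpow_mul_Gamma_mul_Gamma {α : ℝ} (h0 : 0 < α) (h2 : α < 2) (h1 : α ≠ 1) :
    √π < 2 ^ (1 - α) * Gamma ((2 - α) / 2) * Gamma ((1 + α) / 2) := by
  have hduplication : 2 ^ (1 - α) * Gamma ((2 - α) / 2) * Gamma (1 + (1 - α) / 2)
      = √π * Gamma (1 + (1 - α)) := by
    have h := Gamma_mul_Gamma_add_half ((2 - α) / 2)
    rw [show (2 - α) / 2 + 1 / 2 = 1 + (1 - α) / 2 by ring,
      show 2 * ((2 - α) / 2) = 1 + (1 - α) by ring] at h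
    rw [mul_assoc, h]
    have h2pow : (2 : ℝ) ^ (1 - α) * 2 ^ (1 - (1 + (1 - α))) = 1 := by
      rw [← rpow_add two_pos]; norm_num
    linear_combination (Gamma (1 + (1 - α)) * √π) * h2pow
  have hkey := Gamma_one_add_half_lt (sub_ne_zero.2 h1.symm) (by linarith) (by linarith)
  rw [show 1 - (1 - α) / 2 = (1 + α) / 2 by ring] at hkey
  have hpos : 0 < Gamma (1 + (1 - α) / 2) := Gamma_pos_of_pos (by linarith)
  refine lt_of_mul_lt_mul_right ?_ hpos.le
  calc √π * Gamma (1 + (1 - α) / 2) < √π * (Gamma (1 + (1 - α)) * Gamma ((1 + α) / 2)) :=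
        mul_lt_mul_of_pos_left hkey (sqrt_pos.2 pi_pos)
    _ = 2 ^ (1 - α) * Gamma ((2 - α) / 2) * Gamma ((1 + α) / 2) * Gamma (1 + (1 - α) / 2) := by
        rw [← mul_assoc, ← hduplication]; ring

/-- The constant `κ_{1,α} = (1/α)[2^(1-α) Γ((2-α)/2) Γ((1+α)/2)/√π − 1]` is strictly
positive for `α ∈ (0,2) ∖ {1}`, and vanishes at `α = 1`. -/
theorem stmt19 :
    (∀ α : ℝ, 0 < α → α < 2 → α ≠ 1 →
      0 < (1 / α) * ((2 : ℝ) ^ (1 - α) * Real.Gamma ((2 - α) / 2)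
        * Real.Gamma ((1 + α) / 2) / Real.sqrt Real.pi - 1)) ∧
    (1 / (1 : ℝ)) * ((2 : ℝ) ^ (1 - (1 : ℝ)) * Real.Gamma ((2 - (1 : ℝ)) / 2)
        * Real.Gamma ((1 + (1 : ℝ)) / 2) / Real.sqrt Real.pi - 1) = 0 := by
  refine ⟨fun α h0 h2 h1 => ?_, ?_⟩
  · refine mul_pos (by positivity) (sub_pos.2 ?_)
    exact (one_lt_div (sqrt_pos.2 pi_pos)).2 (sqrt_pi_lt_two_rpow_mul_Gamma_mul_Gamma h0 h2 h1)
  · norm_num [Gamma_one_half_eq, (sqrt_pos.2 pi_pos).ne']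
end
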